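/- arXiv:2202.06787 — 2 statements merged into one kernel-verified Lean document; each statement's English description precedes it below -/
import Mathlib

section
/- Let p̲ ≤ p̄ be reals, p₀ ∈ ℝ, α > 0, and ε > 0. Define the smoothed response p^ε(Δ) := p̲ + ε·ln[1 + exp((p̄ − p̲)/ε)/(1 + exp((p̄ − p₀ − αΔ)/ε))] and the true response p(Δ) := proj_{[p̲,p̄]}(p₀ + αΔ). Then sup over Δ ∈ ℝ of |p^ε(Δ) − p(Δ)| is at most 2ε·ln 2; in particular it converges to 0 as ε → 0⁺. -/
/-!
With `w = p₀ + αΔ`, the smoothed response is `p̲ + ε·LSE(0, p̄ - w, p̄ - p̲) - ε·LSE(0, p̄ - w)`,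
where `ε·LSE` is the log-sum-exp smooth maximum at temperature `ε`, while the projection is the
same expression with `ε·LSE` replaced by the true maximum. The smooth maximum of `n` numbers
exceeds their maximum by at most `ε log n`, so the error lies in `[-ε log 2, ε log 3]`.
-/

open Real Finset

noncomputable def smoothMax {ι : Type*} (ε : ℝ) (s : Finset ι) (f : ι → ℝ) : ℝ :=
  ε * log (∑ i ∈ s, exp (f i / ε))

section SmoothMax

variable {ι : Type*} {ε : ℝ} {s : Finset ι} {f : ι → ℝ}

theorem le_smoothMax (hε : 0 < ε) {i : ι} (hi : i ∈ s) : f i ≤ smoothMax ε s f := by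
  have hle : exp (f i / ε) ≤ ∑ j ∈ s, exp (f j / ε) :=
    single_le_sum (f := fun j => exp (f j / ε)) (fun j _ => (exp_pos _).le) hi
  have := log_le_log (exp_pos _) hle
  rwa [log_exp, div_le_iff₀' hε] at this

theorem smoothMax_le (hε : 0 < ε) (hs : s.Nonempty) {M : ℝ} (hM : ∀ i ∈ s, f i ≤ M) :
    smoothMax ε s f ≤ M + ε * log #s := by
  have hsum : ∑ j ∈ s, exp (f j / ε) ≤ #s * exp (M / ε) := by
    simpa using sum_le_card_nsmul s _ _ fun j hj =>
      exp_le_exp.mpr (div_le_div_of_nonneg_right (hM j hj) hε.le)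
  have hpos : 0 < ∑ j ∈ s, exp (f j / ε) := sum_pos (fun j _ => exp_pos _) hs
  calc smoothMax ε s f ≤ ε * log (#s * exp (M / ε)) := by
        unfold smoothMax; gcongr
    _ = M + ε * log #s := by
        rw [log_mul (by simpa using hs.ne_empty) (exp_pos _).ne', log_exp]
        field_simp
        ring

end SmoothMax

theorem min_max_eq_add_max_sub_max {lo hi : ℝ} (h : lo ≤ hi) (w : ℝ) :
    min hi (max lo w) = lo + max (hi - lo) (hi - w) - max 0 (hi - w) := by
  grind

theorem smoothed_eq_sub_smoothMax (ε lo hi w : ℝ) :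
    lo + ε * log (1 + exp ((hi - lo) / ε) / (1 + exp ((hi - w) / ε))) =
      lo + smoothMax ε univ ![0, hi - w, hi - lo] - smoothMax ε univ ![0, hi - w] := by
  have hpos : 0 < 1 + exp ((hi - w) / ε) := by positivity
  have : 1 + exp ((hi - lo) / ε) / (1 + exp ((hi - w) / ε)) =
      (1 + exp ((hi - w) / ε) + exp ((hi - lo) / ε)) / (1 + exp ((hi - w) / ε)) := by
    field_simp
  simp only [smoothMax, Fin.sum_univ_three, Fin.sum_univ_two, Fin.isValue, Matrix.cons_val_zero,
    Matrix.cons_val_one, Matrix.cons_val, Matrix.cons_val_fin_one, zero_div, exp_zero]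
  rw [this, log_div (by positivity) hpos.ne']
  ring

theorem abs_smoothed_sub_clamp_le {ε : ℝ} (hε : 0 < ε) {lo hi : ℝ} (h : lo ≤ hi) (w : ℝ) :
    |lo + ε * log (1 + exp ((hi - lo) / ε) / (1 + exp ((hi - w) / ε))) - min hi (max lo w)| ≤
      2 * ε * log 2 := by
  set M₃ := max (hi - lo) (hi - w)
  set M₂ := max 0 (hi - w)
  have lower₃ : M₃ ≤ smoothMax ε univ ![0, hi - w, hi - lo] :=
    max_le (le_smoothMax (f := ![0, hi - w, hi - lo]) (i := 2) hε (mem_univ _))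
      (le_smoothMax (f := ![0, hi - w, hi - lo]) (i := 1) hε (mem_univ _))
  have upper₃ : smoothMax ε univ ![0, hi - w, hi - lo] ≤ M₃ + ε * log 3 := by
    have := smoothMax_le hε univ_nonempty (M := M₃) (f := ![0, hi - w, hi - lo]) (by
      simp [M₃, h, Fin.forall_fin_succ])
    simpa using this
  have lower₂ : M₂ ≤ smoothMax ε univ ![0, hi - w] :=
    max_le (le_smoothMax (f := ![0, hi - w]) (i := 0) hε (mem_univ _))
      (le_smoothMax (f := ![0, hi - w]) (i := 1) hε (mem_univ _))
  have upper₂ : smoothMax ε univ ![0, hi - w] ≤ M₂ + ε * log 2 := by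
    have := smoothMax_le hε univ_nonempty (M := M₂) (f := ![0, hi - w]) (by
      simp [M₂, Fin.forall_fin_succ])
    simpa using this
  have log_three : ε * log 3 ≤ 2 * ε * log 2 := by
    rw [mul_comm 2 ε, mul_assoc, ← log_rpow two_pos]
    gcongr
    norm_num
  have log_two_nonneg : 0 ≤ ε * log 2 := mul_nonneg hε.le (log_nonneg one_le_two)
  rw [smoothed_eq_sub_smoothMax, min_max_eq_add_max_sub_max h, abs_le]
  constructor <;> linarith

theorem smoothed_projection_response_approx_general
    (plo phi p0 α ε : ℝ) (h : plo ≤ phi) (hε : 0 < ε) :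
    ∀ Δ : ℝ,
      |(plo + ε * Real.log (1 + Real.exp ((phi - plo) / ε) /
          (1 + Real.exp ((phi - p0 - α * Δ) / ε)))) -
        min phi (max plo (p0 + α * Δ))| ≤ 2 * ε * Real.log 2 := by
  intro Δ
  simpa only [sub_sub] using abs_smoothed_sub_clamp_le hε h (p0 + α * Δ)

theorem smoothed_projection_response_approx
    (plo phi p0 α ε : ℝ) (h : plo ≤ phi) (hα : 0 < α) (hε : 0 < ε) :
    ∀ Δ : ℝ,
      |(plo + ε * Real.log (1 + Real.exp ((phi - plo) / ε) /
          (1 + Real.exp ((phi - p0 - α * Δ) / ε)))) -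
        min phi (max plo (p0 + α * Δ))| ≤ 2 * ε * Real.log 2 :=
  smoothed_projection_response_approx_general plo phi p0 α ε h hε
end

section
/- Let q̲ ≤ q̄ and v̲ ≤ v₀ ≤ v̄ be reals. Define S := {(q,v) : q̲ ≤ q ≤ q̄, v = v₀} ∪ {(q,v) : q = q̄, v̲ ≤ v ≤ v₀} ∪ {(q,v) : q = q̲, v₀ ≤ v ≤ v̄}. Then (q,v) ∈ S if and only if there exist v⁺, v⁻ with 0 ≤ v⁺, v⁻ ≤ v̄ − v̲, v = v₀ + v⁺ − v⁻, min{q − q̲, v⁺} ≤ 0, min{−q + q̄, v⁻} ≤ 0, q̲ ≤ q ≤ q̄, and v̲ ≤ v ≤ v̄. -/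
theorem pvpq_disjunction_lifted_characterization
    (qlo qhi vlo v0 vhi : ℝ) (hq : qlo ≤ qhi) (hv0lo : vlo ≤ v0) (hv0hi : v0 ≤ vhi)
    (q v : ℝ) :
    ((qlo ≤ q ∧ q ≤ qhi ∧ v = v0) ∨
     (q = qhi ∧ vlo ≤ v ∧ v ≤ v0) ∨
     (q = qlo ∧ v0 ≤ v ∧ v ≤ vhi)) ↔
    (∃ vp vn : ℝ,
      0 ≤ vp ∧ vp ≤ vhi - vlo ∧ 0 ≤ vn ∧ vn ≤ vhi - vlo ∧
      v = v0 + vp - vn ∧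
      min (q - qlo) vp ≤ 0 ∧
      min (-q + qhi) vn ≤ 0 ∧
      qlo ≤ q ∧ q ≤ qhi ∧ vlo ≤ v ∧ v ≤ vhi) := by
  constructor
  · rintro (⟨h1, h2, h3⟩ | ⟨h1, h2, h3⟩ | ⟨h1, h2, h3⟩)
    · exact ⟨0, 0, le_refl _, by linarith, le_refl _, by linarith, by linarith,
        min_le_of_right_le le_rfl, min_le_of_right_le le_rfl,
        h1, h2, by linarith, by linarith⟩
    · exact ⟨0, v0 - v, le_refl _, by linarith, by linarith, by linarith, by linarith,
        min_le_of_right_le le_rfl, min_le_of_left_le (by linarith),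
        by linarith, by linarith, h2, by linarith⟩
    · exact ⟨v - v0, 0, by linarith, by linarith, le_refl _, by linarith, by linarith,
        min_le_of_left_le (by linarith), min_le_of_right_le le_rfl,
        by linarith, by linarith, by linarith, h3⟩
  · rintro ⟨vp, vn, hp0, hp1, hn0, hn1, hv, hm1, hm2, hql, hqh, hvl, hvh⟩
    rw [min_le_iff] at hm1 hm2
    rcases hm1 with h1 | h1 <;> rcases hm2 with h2 | h2
    · rcases le_total v v0 with hc | hc
      · exact Or.inr (Or.inl ⟨by linarith, hvl, hc⟩)
      · exact Or.inr (Or.inr ⟨by linarith, hc, hvh⟩)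
    · exact Or.inr (Or.inr ⟨by linarith, by linarith, hvh⟩)
    · exact Or.inr (Or.inl ⟨by linarith, hvl, by linarith⟩)
    · exact Or.inl ⟨hql, hqh, by linarith⟩
end
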